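/- (Theorem 1) Let φ_T(s,v) = T(s) × T*(s) + v·T(s) be the ruled surface associated to the dual tangent indicatrix, where T* = β_T × T and N* = β_N × N, and suppose κ(s) ≠ 0 and τ*(s) ≠ 0 for all s. Then the Gaussian curvature K_T and the mean curvature H_T of φ_T vanish at every regular point (s,v) if and only if κ* ≡ 0 and τ ≡ 0. -/

import Mathlib

open Matrix

noncomputable section

/-- Cross product on ℝ³ (as `Fin 3 → ℝ`). -/
def cross3 (a b : Fin 3 → ℝ) : Fin 3 → ℝ := crossProduct a b

/-- Euclidean norm on ℝ³ (as `Fin 3 → ℝ`). -/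
noncomputable def enorm3 (a : Fin 3 → ℝ) : ℝ := Real.sqrt (a ⬝ᵥ a)

/-- A dual Frenet apparatus: smooth maps `T, N, B, T*, N*, B* : ℝ → ℝ³` and smooth
functions `κ, τ, κ*, τ* : ℝ → ℝ` such that `{T, N, B}` is orthonormal with `B = T × N`,
the real Frenet equations hold, and the dual-part Frenet equations hold. -/
structure DualFrenetApparatus where
  T : ℝ → Fin 3 → ℝ
  N : ℝ → Fin 3 → ℝ
  B : ℝ → Fin 3 → ℝ
  Tstar : ℝ → Fin 3 → ℝ
  Nstar : ℝ → Fin 3 → ℝ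
  Bstar : ℝ → Fin 3 → ℝ
  kappa : ℝ → ℝ
  tau : ℝ → ℝ
  kappaStar : ℝ → ℝ
  tauStar : ℝ → ℝ
  smooth_T : ContDiff ℝ (⊤ : ℕ∞) T
  smooth_N : ContDiff ℝ (⊤ : ℕ∞) N
  smooth_B : ContDiff ℝ (⊤ : ℕ∞) B
  smooth_Tstar : ContDiff ℝ (⊤ : ℕ∞) Tstar
  smooth_Nstar : ContDiff ℝ (⊤ : ℕ∞) Nstar
  smooth_Bstar : ContDiff ℝ (⊤ : ℕ∞) Bstar
  smooth_kappa : ContDiff ℝ (⊤ : ℕ∞) kappa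
  smooth_tau : ContDiff ℝ (⊤ : ℕ∞) tau
  smooth_kappaStar : ContDiff ℝ (⊤ : ℕ∞) kappaStar
  smooth_tauStar : ContDiff ℝ (⊤ : ℕ∞) tauStar
  unit_T : ∀ s, T s ⬝ᵥ T s = 1
  unit_N : ∀ s, N s ⬝ᵥ N s = 1
  unit_B : ∀ s, B s ⬝ᵥ B s = 1
  orth_TN : ∀ s, T s ⬝ᵥ N s = 0
  orth_TB : ∀ s, T s ⬝ᵥ B s = 0
  orth_NB : ∀ s, N s ⬝ᵥ B s = 0
  B_eq : ∀ s, B s = cross3 (T s) (N s)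
  frenet_T : ∀ s, deriv T s = kappa s • N s
  frenet_N : ∀ s, deriv N s = (-(kappa s)) • T s + tau s • B s
  frenet_B : ∀ s, deriv B s = (-(tau s)) • N s
  frenet_Tstar : ∀ s, deriv Tstar s = kappa s • Nstar s + kappaStar s • N s
  frenet_Nstar : ∀ s, deriv Nstar s =
    (-(kappa s)) • Tstar s + (-(kappaStar s)) • T s + tau s • Bstar s + tauStar s • B s
  frenet_Bstar : ∀ s, deriv Bstar s = (-(tau s)) • Nstar s + (-(tauStar s)) • N s

/-- Partial derivative of a parametrized surface with respect to the first parameter. -/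
noncomputable def phiS (φ : ℝ → ℝ → Fin 3 → ℝ) (s v : ℝ) : Fin 3 → ℝ :=
  deriv (fun t => φ t v) s

/-- Partial derivative with respect to the second parameter. -/
noncomputable def phiV (φ : ℝ → ℝ → Fin 3 → ℝ) (s v : ℝ) : Fin 3 → ℝ :=
  deriv (φ s) v

noncomputable def phiSS (φ : ℝ → ℝ → Fin 3 → ℝ) (s v : ℝ) : Fin 3 → ℝ :=
  deriv (fun t => phiS φ t v) s

noncomputable def phiSV (φ : ℝ → ℝ → Fin 3 → ℝ) (s v : ℝ) : Fin 3 → ℝ :=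
  deriv (fun w => phiS φ s w) v

noncomputable def phiVV (φ : ℝ → ℝ → Fin 3 → ℝ) (s v : ℝ) : Fin 3 → ℝ :=
  deriv (fun w => phiV φ s w) v

/-- `(s, v)` is a regular point of `φ` if `φ_s × φ_v ≠ 0` there. -/
def IsRegularPoint (φ : ℝ → ℝ → Fin 3 → ℝ) (s v : ℝ) : Prop :=
  cross3 (phiS φ s v) (phiV φ s v) ≠ 0

/-- The unit normal `n = (φ_v × φ_s) / ‖φ_v × φ_s‖`. -/
noncomputable def unitNormal (φ : ℝ → ℝ → Fin 3 → ℝ) (s v : ℝ) : Fin 3 → ℝ :=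
  (enorm3 (cross3 (phiV φ s v) (phiS φ s v)))⁻¹ • cross3 (phiV φ s v) (phiS φ s v)

/-- Gaussian curvature `K = (eg − f²)/(EG − F²)`. -/
noncomputable def GaussK (φ : ℝ → ℝ → Fin 3 → ℝ) (s v : ℝ) : ℝ :=
  (phiSS φ s v ⬝ᵥ unitNormal φ s v * (phiVV φ s v ⬝ᵥ unitNormal φ s v) -
      (phiSV φ s v ⬝ᵥ unitNormal φ s v) ^ 2) /
    (phiS φ s v ⬝ᵥ phiS φ s v * (phiV φ s v ⬝ᵥ phiV φ s v) -
      (phiS φ s v ⬝ᵥ phiV φ s v) ^ 2)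

/-- Mean curvature (trace of the shape operator) `H = (eG − 2fF + gE)/(EG − F²)`. -/
noncomputable def MeanH (φ : ℝ → ℝ → Fin 3 → ℝ) (s v : ℝ) : ℝ :=
  (phiSS φ s v ⬝ᵥ unitNormal φ s v * (phiV φ s v ⬝ᵥ phiV φ s v) -
      2 * (phiSV φ s v ⬝ᵥ unitNormal φ s v) * (phiS φ s v ⬝ᵥ phiV φ s v) +
      phiVV φ s v ⬝ᵥ unitNormal φ s v * (phiS φ s v ⬝ᵥ phiS φ s v)) /
    (phiS φ s v ⬝ᵥ phiS φ s v * (phiV φ s v ⬝ᵥ phiV φ s v) -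
      (phiS φ s v ⬝ᵥ phiV φ s v) ^ 2)

/-- The ruled surface `φ_X(s,v) = X(s) × X*(s) + v·X(s)`. -/
noncomputable def ruled (X Xstar : ℝ → Fin 3 → ℝ) : ℝ → ℝ → Fin 3 → ℝ :=
  fun s v => cross3 (X s) (Xstar s) + v • X s


/-! ### Auxiliary component lemmas for `cross3` and `⬝ᵥ` -/

lemma cross3_c0 (a b : Fin 3 → ℝ) : cross3 a b 0 = a 1 * b 2 - a 2 * b 1 := by
  simp [cross3, cross_apply]
lemma cross3_c1 (a b : Fin 3 → ℝ) : cross3 a b 1 = a 2 * b 0 - a 0 * b 2 := by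
  simp [cross3, cross_apply]
lemma cross3_c2 (a b : Fin 3 → ℝ) : cross3 a b 2 = a 0 * b 1 - a 1 * b 0 := by
  simp [cross3, cross_apply]
lemma dot3 (a b : Fin 3 → ℝ) : a ⬝ᵥ b = a 0 * b 0 + a 1 * b 1 + a 2 * b 2 := by
  simp [dotProduct, Fin.sum_univ_three]

lemma cross_cross3 (a b c : Fin 3 → ℝ) :
    cross3 a (cross3 b c) = (a ⬝ᵥ c) • b - (a ⬝ᵥ b) • c := by
  funext i; fin_cases i <;>
    simp [cross3_c0, cross3_c1, cross3_c2, dot3] <;> ring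

lemma dot_cross_cyc (a b c : Fin 3 → ℝ) : cross3 a b ⬝ᵥ c = cross3 b c ⬝ᵥ a := by
  simp [dot3, cross3_c0, cross3_c1, cross3_c2]; ring

lemma cross3_anticomm (a b : Fin 3 → ℝ) : cross3 a b = - cross3 b a := by
  funext i; fin_cases i <;> simp [cross3_c0, cross3_c1, cross3_c2] <;> ring

lemma lagrange3 (a b : Fin 3 → ℝ) :
    cross3 a b ⬝ᵥ cross3 a b = (a ⬝ᵥ a) * (b ⬝ᵥ b) - (a ⬝ᵥ b) ^ 2 := by
  simp [dot3, cross3_c0, cross3_c1, cross3_c2]; ring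

lemma cross3_dot_left (a b : Fin 3 → ℝ) : cross3 a b ⬝ᵥ a = 0 := by
  simp [dot3, cross3_c0, cross3_c1, cross3_c2]; ring
lemma cross3_dot_right (a b : Fin 3 → ℝ) : cross3 a b ⬝ᵥ b = 0 := by
  simp [dot3, cross3_c0, cross3_c1, cross3_c2]; ring
lemma cross3_zero_right (a : Fin 3 → ℝ) : cross3 a 0 = 0 := by
  funext i; fin_cases i <;> simp [cross3_c0, cross3_c1, cross3_c2]
lemma cross3_self (a : Fin 3 → ℝ) : cross3 a a = 0 := by
  funext i; fin_cases i <;> simp [cross3_c0, cross3_c1, cross3_c2] <;> ring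
lemma cross3_add_right (a b c : Fin 3 → ℝ) : cross3 a (b + c) = cross3 a b + cross3 a c := by
  funext i; fin_cases i <;> simp [cross3_c0, cross3_c1, cross3_c2] <;> ring
lemma cross3_smul_right (r : ℝ) (a b : Fin 3 → ℝ) : cross3 a (r • b) = r • cross3 a b := by
  funext i; fin_cases i <;> simp [cross3_c0, cross3_c1, cross3_c2] <;> ring
lemma cross3_smul_left (r : ℝ) (a b : Fin 3 → ℝ) : cross3 (r • a) b = r • cross3 a b := by
  funext i; fin_cases i <;> simp [cross3_c0, cross3_c1, cross3_c2] <;> ring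

lemma HasDerivAt.cross3' {f g : ℝ → Fin 3 → ℝ} {f' g' : Fin 3 → ℝ} {t : ℝ}
    (hf : HasDerivAt f f' t) (hg : HasDerivAt g g' t) :
    HasDerivAt (fun t => cross3 (f t) (g t)) (cross3 f' (g t) + cross3 (f t) g') t := by
  rw [hasDerivAt_pi] at hf hg ⊢
  intro i
  fin_cases i
  · show HasDerivAt (fun x => cross3 (f x) (g x) 0) ((cross3 f' (g t) + cross3 (f t) g') 0) t
    simp only [cross3_c0, Pi.add_apply]
    refine HasDerivAt.congr_deriv (((hf 1).mul (hg 2)).sub ((hf 2).mul (hg 1))) ?_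
    ring
  · show HasDerivAt (fun x => cross3 (f x) (g x) 1) ((cross3 f' (g t) + cross3 (f t) g') 1) t
    simp only [cross3_c1, Pi.add_apply]
    refine HasDerivAt.congr_deriv (((hf 2).mul (hg 0)).sub ((hf 0).mul (hg 2))) ?_
    ring
  · show HasDerivAt (fun x => cross3 (f x) (g x) 2) ((cross3 f' (g t) + cross3 (f t) g') 2) t
    simp only [cross3_c2, Pi.add_apply]
    refine HasDerivAt.congr_deriv (((hf 0).mul (hg 1)).sub ((hf 1).mul (hg 0))) ?_
    ring

lemma HasDerivAt.dot3' {f g : ℝ → Fin 3 → ℝ} {f' g' : Fin 3 → ℝ} {t : ℝ}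
    (hf : HasDerivAt f f' t) (hg : HasDerivAt g g' t) :
    HasDerivAt (fun t => f t ⬝ᵥ g t) (f' ⬝ᵥ g t + f t ⬝ᵥ g') t := by
  rw [hasDerivAt_pi] at hf hg
  have h := (((hf 0).mul (hg 0)).add ((hf 1).mul (hg 1))).add ((hf 2).mul (hg 2))
  have he : (fun x => f x 0 * g x 0 + f x 1 * g x 1 + f x 2 * g x 2)
      = fun x => f x ⬝ᵥ g x := by funext x; rw [dot3]
  change HasDerivAt (fun x => f x 0 * g x 0 + f x 1 * g x 1 + f x 2 * g x 2) _ t at h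
  rw [he] at h
  convert h using 1
  rw [dot3, dot3]; ring

/-! ### Frenet frame consequences -/

section Frame
variable (F : DualFrenetApparatus)

lemma F_hdT (s : ℝ) : HasDerivAt F.T (F.kappa s • F.N s) s := by
  have h := (F.smooth_T.differentiable (by simp) s).hasDerivAt
  rwa [F.frenet_T s] at h

lemma F_hdN (s : ℝ) : HasDerivAt F.N ((-(F.kappa s)) • F.T s + F.tau s • F.B s) s := by
  have h := (F.smooth_N.differentiable (by simp) s).hasDerivAt
  rwa [F.frenet_N s] at h

lemma F_hdB (s : ℝ) : HasDerivAt F.B ((-(F.tau s)) • F.N s) s := by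
  have h := (F.smooth_B.differentiable (by simp) s).hasDerivAt
  rwa [F.frenet_B s] at h

lemma F_hdTs (s : ℝ) :
    HasDerivAt F.Tstar (F.kappa s • F.Nstar s + F.kappaStar s • F.N s) s := by
  have h := (F.smooth_Tstar.differentiable (by simp) s).hasDerivAt
  rwa [F.frenet_Tstar s] at h

lemma F_hdNs (s : ℝ) :
    HasDerivAt F.Nstar ((-(F.kappa s)) • F.Tstar s + (-(F.kappaStar s)) • F.T s
      + F.tau s • F.Bstar s + F.tauStar s • F.B s) s := by
  have h := (F.smooth_Nstar.differentiable (by simp) s).hasDerivAt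
  rwa [F.frenet_Nstar s] at h

lemma F_hdK (s : ℝ) : HasDerivAt F.kappa (deriv F.kappa s) s :=
  (F.smooth_kappa.differentiable (by simp) s).hasDerivAt

lemma F_hdKs (s : ℝ) : HasDerivAt F.kappaStar (deriv F.kappaStar s) s :=
  (F.smooth_kappaStar.differentiable (by simp) s).hasDerivAt

lemma F_dNT (s : ℝ) : F.N s ⬝ᵥ F.T s = 0 := by
  rw [dotProduct_comm]; exact F.orth_TN s
lemma F_dBT (s : ℝ) : F.B s ⬝ᵥ F.T s = 0 := by
  rw [dotProduct_comm]; exact F.orth_TB s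
lemma F_dBN (s : ℝ) : F.B s ⬝ᵥ F.N s = 0 := by
  rw [dotProduct_comm]; exact F.orth_NB s

lemma F_crossTB (s : ℝ) : cross3 (F.T s) (F.B s) = - F.N s := by
  rw [F.B_eq, cross_cross3, F.orth_TN s, F.unit_T s]; simp

lemma F_crossBT (s : ℝ) : cross3 (F.B s) (F.T s) = F.N s := by
  rw [cross3_anticomm, F_crossTB]; simp

lemma F_crossNT (s : ℝ) : cross3 (F.N s) (F.T s) = - F.B s := by
  rw [cross3_anticomm, ← F.B_eq]

lemma F_crossNB (s : ℝ) : cross3 (F.N s) (F.B s) = F.T s := by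
  rw [F.B_eq, cross_cross3, F.unit_N s, F_dNT]; simp

lemma F_crossBN (s : ℝ) : cross3 (F.B s) (F.N s) = - F.T s := by
  rw [cross3_anticomm, F_crossNB]

/-- Completeness of the frame: every vector expands as its frame components. -/
lemma F_expand (s : ℝ) (x : Fin 3 → ℝ) :
    x = (x ⬝ᵥ F.T s) • F.T s + (x ⬝ᵥ F.N s) • F.N s + (x ⬝ᵥ F.B s) • F.B s := by
  set y := x - ((x ⬝ᵥ F.T s) • F.T s + (x ⬝ᵥ F.N s) • F.N s + (x ⬝ᵥ F.B s) • F.B s) with hy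
  have hyT : y ⬝ᵥ F.T s = 0 := by
    simp only [hy, sub_dotProduct, add_dotProduct, smul_dotProduct, smul_eq_mul,
      F.unit_T s, F_dNT, F_dBT]
    ring
  have hyN : y ⬝ᵥ F.N s = 0 := by
    simp only [hy, sub_dotProduct, add_dotProduct, smul_dotProduct, smul_eq_mul,
      F.unit_N s, F.orth_TN s, F_dBN]
    ring
  have hyB : y ⬝ᵥ F.B s = 0 := by
    simp only [hy, sub_dotProduct, add_dotProduct, smul_dotProduct, smul_eq_mul,
      F.unit_B s, F.orth_TB s, F.orth_NB s]
    ring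
  have hyB0 : cross3 y (F.B s) = 0 := by
    rw [F.B_eq, cross_cross3, hyT, hyN]; simp
  have hBy : cross3 (F.B s) y = 0 := by
    rw [cross3_anticomm, hyB0]; simp
  have h2 := cross_cross3 (F.B s) (F.B s) y
  rw [hBy, cross3_zero_right, F.unit_B s, dotProduct_comm, hyB] at h2
  have hy0 : y = 0 := by
    have := h2.symm
    rwa [zero_smul, one_smul, zero_sub, neg_eq_zero] at this
  rw [hy] at hy0
  exact sub_eq_zero.mp hy0

lemma F_crossT_any (s : ℝ) (x : Fin 3 → ℝ) :
    cross3 (F.T s) x = (x ⬝ᵥ F.N s) • F.B s - (x ⬝ᵥ F.B s) • F.N s := by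
  conv_lhs => rw [F_expand F s x]
  rw [cross3_add_right, cross3_add_right, cross3_smul_right, cross3_smul_right,
    cross3_smul_right, cross3_self, ← F.B_eq s, F_crossTB]
  simp [smul_neg, sub_eq_add_neg]

end Frame

/-! ### Derivative formulas for the ruled surface of the dual tangent indicatrix -/

section Ruled
variable (F : DualFrenetApparatus)

lemma phiS_ruled (s v : ℝ) : phiS (ruled F.T F.Tstar) s v =
    cross3 (F.kappa s • F.N s) (F.Tstar s) +
      cross3 (F.T s) (F.kappa s • F.Nstar s + F.kappaStar s • F.N s) +
      v • (F.kappa s • F.N s) := by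
  have h : HasDerivAt (fun t => cross3 (F.T t) (F.Tstar t) + v • F.T t)
      (cross3 (F.kappa s • F.N s) (F.Tstar s) +
        cross3 (F.T s) (F.kappa s • F.Nstar s + F.kappaStar s • F.N s) +
        (v • (F.kappa s • F.N s))) s := by
    have h1 := (F_hdT F s).cross3' (F_hdTs F s)
    have h2 := (F_hdT F s).const_smul v
    exact h1.add h2
  exact h.deriv

lemma phiV_ruled (s v : ℝ) : phiV (ruled F.T F.Tstar) s v = F.T s := by
  have h := (hasDerivAt_const v (cross3 (F.T s) (F.Tstar s))).add
    ((hasDerivAt_id v).smul_const (F.T s))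
  simp only [zero_add, one_smul] at h
  exact h.deriv

lemma phiVV_ruled (s v : ℝ) : phiVV (ruled F.T F.Tstar) s v = 0 := by
  have h : (fun w => phiV (ruled F.T F.Tstar) s w) = fun _ => F.T s :=
    funext fun w => phiV_ruled F s w
  rw [phiVV, h, deriv_const]

lemma phiSV_ruled (s v : ℝ) : phiSV (ruled F.T F.Tstar) s v = F.kappa s • F.N s := by
  have hfun : (fun w => phiS (ruled F.T F.Tstar) s w)
      = fun w => (cross3 (F.kappa s • F.N s) (F.Tstar s) +
          cross3 (F.T s) (F.kappa s • F.Nstar s + F.kappaStar s • F.N s)) +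
          w • (F.kappa s • F.N s) := by
    funext w
    rw [phiS_ruled]
  have h := (hasDerivAt_const v (cross3 (F.kappa s • F.N s) (F.Tstar s) +
      cross3 (F.T s) (F.kappa s • F.Nstar s + F.kappaStar s • F.N s))).add
    ((hasDerivAt_id v).smul_const (F.kappa s • F.N s))
  simp only [zero_add, one_smul] at h
  rw [phiSV, hfun]
  exact h.deriv

lemma phiS_dot_N (s v : ℝ) : phiS (ruled F.T F.Tstar) s v ⬝ᵥ F.N s
    = F.kappa s * (v - F.B s ⬝ᵥ F.Nstar s) := by
  rw [phiS_ruled]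
  have h2 : cross3 (F.T s) (F.Nstar s) ⬝ᵥ F.N s = -(F.B s ⬝ᵥ F.Nstar s) := by
    rw [dot_cross_cyc, dot_cross_cyc, F_crossNT]
    simp [neg_dotProduct]
  have h3 : cross3 (F.T s) (F.N s) ⬝ᵥ F.N s = 0 := cross3_dot_right _ _
  simp only [cross3_smul_left, cross3_add_right, cross3_smul_right, add_dotProduct,
    smul_dotProduct, smul_eq_mul, cross3_dot_left, h2, h3, F.unit_N s]
  ring

lemma phiS_dot_B (hT0 : ∀ s, F.T s ⬝ᵥ F.Tstar s = 0)
    (hN0 : ∀ s, F.N s ⬝ᵥ F.Nstar s = 0) (s v : ℝ) :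
    phiS (ruled F.T F.Tstar) s v ⬝ᵥ F.B s = F.kappaStar s := by
  rw [phiS_ruled]
  have h1 : cross3 (F.N s) (F.Tstar s) ⬝ᵥ F.B s = 0 := by
    rw [dot_cross_cyc, dot_cross_cyc, F_crossBN]
    simp [neg_dotProduct, hT0 s]
  have h2 : cross3 (F.T s) (F.Nstar s) ⬝ᵥ F.B s = 0 := by
    rw [dot_cross_cyc, dot_cross_cyc, F_crossBT]
    exact hN0 s
  have h3 : cross3 (F.T s) (F.N s) ⬝ᵥ F.B s = 1 := by
    rw [← F.B_eq]; exact F.unit_B s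
  simp only [cross3_smul_left, cross3_add_right, cross3_smul_right, add_dotProduct,
    smul_dotProduct, smul_eq_mul, h1, h2, h3, F.orth_NB s]
  ring

lemma W_ruled (hT0 : ∀ s, F.T s ⬝ᵥ F.Tstar s = 0)
    (hN0 : ∀ s, F.N s ⬝ᵥ F.Nstar s = 0) (s v : ℝ) :
    cross3 (phiV (ruled F.T F.Tstar) s v) (phiS (ruled F.T F.Tstar) s v)
      = (F.kappa s * (v - F.B s ⬝ᵥ F.Nstar s)) • F.B s - F.kappaStar s • F.N s := by
  rw [phiV_ruled, F_crossT_any F s, phiS_dot_N, phiS_dot_B F hT0 hN0]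

lemma phiSS_dot_B (hT0 : ∀ s, F.T s ⬝ᵥ F.Tstar s = 0)
    (hN0 : ∀ s, F.N s ⬝ᵥ F.Nstar s = 0)
    (hks : ∀ s, F.kappaStar s = 0) (s v : ℝ) :
    phiSS (ruled F.T F.Tstar) s v ⬝ᵥ F.B s
      = F.tau s * (phiS (ruled F.T F.Tstar) s v ⬝ᵥ F.N s) := by
  have hfun : (fun t => phiS (ruled F.T F.Tstar) t v)
      = fun t => cross3 (F.kappa t • F.N t) (F.Tstar t) +
          cross3 (F.T t) (F.kappa t • F.Nstar t + F.kappaStar t • F.N t) +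
          v • (F.kappa t • F.N t) := funext fun t => phiS_ruled F t v
  have hdS : HasDerivAt (fun t => phiS (ruled F.T F.Tstar) t v)
      (phiSS (ruled F.T F.Tstar) s v) s := by
    have hdiff : DifferentiableAt ℝ (fun t => phiS (ruled F.T F.Tstar) t v) s := by
      rw [hfun]
      exact (((((F_hdK F s).smul (F_hdN F s)).cross3' (F_hdTs F s)).add
        ((F_hdT F s).cross3' (((F_hdK F s).smul (F_hdNs F s)).add
          ((F_hdKs F s).smul (F_hdN F s))))).add
        (((F_hdK F s).smul (F_hdN F s)).const_smul v)).differentiableAt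
    exact hdiff.hasDerivAt
  have h2 : HasDerivAt (fun t => phiS (ruled F.T F.Tstar) t v ⬝ᵥ F.B t)
      (phiSS (ruled F.T F.Tstar) s v ⬝ᵥ F.B s +
        phiS (ruled F.T F.Tstar) s v ⬝ᵥ ((-(F.tau s)) • F.N s)) s :=
    hdS.dot3' (F_hdB F s)
  have h1 : (fun t => phiS (ruled F.T F.Tstar) t v ⬝ᵥ F.B t) = fun _ => (0 : ℝ) := by
    funext t; rw [phiS_dot_B F hT0 hN0 t v, hks t]
  have h3 : HasDerivAt (fun t => phiS (ruled F.T F.Tstar) t v ⬝ᵥ F.B t) 0 s := by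
    rw [h1]; exact hasDerivAt_const s 0
  have h4 := h2.unique h3
  have h5 : phiS (ruled F.T F.Tstar) s v ⬝ᵥ ((-(F.tau s)) • F.N s)
      = -(F.tau s * (phiS (ruled F.T F.Tstar) s v ⬝ᵥ F.N s)) := by
    simp [dotProduct_smul, smul_eq_mul]
  rw [h5] at h4
  linarith

end Ruled

/-- **Theorem 1.** Suppose `κ ≠ 0` and `τ* ≠ 0` everywhere. The ruled surface associated
to the dual tangent indicatrix has vanishing Gaussian and mean curvature at every regular
point (hence is a developable — thus Weingarten — and minimal surface) if and only if
`κ* ≡ 0` and `τ ≡ 0`. -/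
theorem weingarten_minimal_tangent_indicatrix (F : DualFrenetApparatus)
    (βT βN : ℝ → Fin 3 → ℝ)
    (hβT : ContDiff ℝ (⊤ : ℕ∞) βT) (hβN : ContDiff ℝ (⊤ : ℕ∞) βN)
    (hTstar : ∀ s, F.Tstar s = cross3 (βT s) (F.T s))
    (hNstar : ∀ s, F.Nstar s = cross3 (βN s) (F.N s))
    (hkappa : ∀ s, F.kappa s ≠ 0) (htauStar : ∀ s, F.tauStar s ≠ 0) :
    (∀ s v : ℝ, IsRegularPoint (ruled F.T F.Tstar) s v →
        GaussK (ruled F.T F.Tstar) s v = 0 ∧ MeanH (ruled F.T F.Tstar) s v = 0) ↔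
      (∀ s, F.kappaStar s = 0) ∧ (∀ s, F.tau s = 0) := by
  have hT0 : ∀ s, F.T s ⬝ᵥ F.Tstar s = 0 := fun s => by
    rw [hTstar s, dotProduct_comm]; exact cross3_dot_right _ _
  have hN0 : ∀ s, F.N s ⬝ᵥ F.Nstar s = 0 := fun s => by
    rw [hNstar s, dotProduct_comm]; exact cross3_dot_right _ _
  have hWW : ∀ s v : ℝ,
      cross3 (phiV (ruled F.T F.Tstar) s v) (phiS (ruled F.T F.Tstar) s v) ⬝ᵥ
        cross3 (phiV (ruled F.T F.Tstar) s v) (phiS (ruled F.T F.Tstar) s v)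
      = (F.kappa s * (v - F.B s ⬝ᵥ F.Nstar s)) ^ 2 + F.kappaStar s ^ 2 := by
    intro s v
    rw [W_ruled F hT0 hN0]
    simp only [sub_dotProduct, dotProduct_sub, smul_dotProduct, dotProduct_smul,
      smul_eq_mul, F.unit_B s, F.unit_N s, F.orth_NB s, F_dBN]
    ring
  have hreg_iff : ∀ s v : ℝ,
      (F.kappa s * (v - F.B s ⬝ᵥ F.Nstar s)) ^ 2 + F.kappaStar s ^ 2 ≠ 0 →
      IsRegularPoint (ruled F.T F.Tstar) s v := by
    intro s v hne h0
    apply hne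
    rw [← hWW s v,
      cross3_anticomm (phiV (ruled F.T F.Tstar) s v) (phiS (ruled F.T F.Tstar) s v), h0]
    simp
  have hden : ∀ s v : ℝ,
      phiS (ruled F.T F.Tstar) s v ⬝ᵥ phiS (ruled F.T F.Tstar) s v *
          (phiV (ruled F.T F.Tstar) s v ⬝ᵥ phiV (ruled F.T F.Tstar) s v) -
        (phiS (ruled F.T F.Tstar) s v ⬝ᵥ phiV (ruled F.T F.Tstar) s v) ^ 2
      = (F.kappa s * (v - F.B s ⬝ᵥ F.Nstar s)) ^ 2 + F.kappaStar s ^ 2 := by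
    intro s v
    rw [← lagrange3, cross3_anticomm]
    simp only [neg_dotProduct, dotProduct_neg, neg_neg]
    exact hWW s v
  have hnorm : ∀ s v : ℝ, enorm3 (cross3 (phiV (ruled F.T F.Tstar) s v)
      (phiS (ruled F.T F.Tstar) s v))
      = Real.sqrt ((F.kappa s * (v - F.B s ⬝ᵥ F.Nstar s)) ^ 2 + F.kappaStar s ^ 2) := by
    intro s v; rw [enorm3, hWW]
  have hf : ∀ s v : ℝ,
      phiSV (ruled F.T F.Tstar) s v ⬝ᵥ unitNormal (ruled F.T F.Tstar) s v
      = (Real.sqrt ((F.kappa s * (v - F.B s ⬝ᵥ F.Nstar s)) ^ 2 + F.kappaStar s ^ 2))⁻¹ *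
          (-(F.kappa s * F.kappaStar s)) := by
    intro s v
    simp only [unitNormal]
    rw [hnorm s v, phiSV_ruled, W_ruled F hT0 hN0 s v]
    simp only [dotProduct_smul, dotProduct_sub, smul_dotProduct, smul_eq_mul,
      F.unit_N s, F.orth_NB s]
    ring
  have hg : ∀ s v : ℝ,
      phiVV (ruled F.T F.Tstar) s v ⬝ᵥ unitNormal (ruled F.T F.Tstar) s v = 0 := by
    intro s v; rw [phiVV_ruled]; exact zero_dotProduct _
  have hG : ∀ s v : ℝ,
      phiV (ruled F.T F.Tstar) s v ⬝ᵥ phiV (ruled F.T F.Tstar) s v = 1 := by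
    intro s v; rw [phiV_ruled]; exact F.unit_T s
  have he : (∀ s, F.kappaStar s = 0) → ∀ s v : ℝ,
      phiSS (ruled F.T F.Tstar) s v ⬝ᵥ unitNormal (ruled F.T F.Tstar) s v
      = (Real.sqrt ((F.kappa s * (v - F.B s ⬝ᵥ F.Nstar s)) ^ 2 + F.kappaStar s ^ 2))⁻¹ *
          (F.kappa s * (v - F.B s ⬝ᵥ F.Nstar s) *
            (F.tau s * (F.kappa s * (v - F.B s ⬝ᵥ F.Nstar s)))) := by
    intro hks s v
    simp only [unitNormal]
    rw [hnorm s v, W_ruled F hT0 hN0 s v]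
    simp only [dotProduct_smul, dotProduct_sub, smul_eq_mul]
    rw [phiSS_dot_B F hT0 hN0 hks s v, phiS_dot_N F s v, hks s]
    ring
  have hKval : ∀ s v : ℝ, GaussK (ruled F.T F.Tstar) s v
      = -((Real.sqrt ((F.kappa s * (v - F.B s ⬝ᵥ F.Nstar s)) ^ 2 + F.kappaStar s ^ 2))⁻¹ *
            (F.kappa s * F.kappaStar s)) ^ 2 /
          ((F.kappa s * (v - F.B s ⬝ᵥ F.Nstar s)) ^ 2 + F.kappaStar s ^ 2) := by
    intro s v
    simp only [GaussK]
    rw [hg s v, hf s v, hden s v]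
    ring_nf
  constructor
  · intro h
    have hks : ∀ s, F.kappaStar s = 0 := by
      intro s
      by_contra hne
      have hApos : 0 < F.kappaStar s ^ 2 :=
        lt_of_le_of_ne (sq_nonneg _) (Ne.symm (pow_ne_zero 2 hne))
      have hd : (F.kappa s * (F.B s ⬝ᵥ F.Nstar s - F.B s ⬝ᵥ F.Nstar s)) ^ 2 +
          F.kappaStar s ^ 2 ≠ 0 := by
        intro hc
        nlinarith [sq_nonneg (F.kappa s * (F.B s ⬝ᵥ F.Nstar s - F.B s ⬝ᵥ F.Nstar s))]
      obtain ⟨hK, -⟩ := h s (F.B s ⬝ᵥ F.Nstar s) (hreg_iff s _ hd)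
      rw [hKval s _] at hK
      have h0 : F.kappa s * (F.B s ⬝ᵥ F.Nstar s - F.B s ⬝ᵥ F.Nstar s) = 0 := by ring
      rw [h0] at hK
      have hz : (0:ℝ) ^ 2 + F.kappaStar s ^ 2 = F.kappaStar s ^ 2 := by ring
      rw [hz] at hK
      have hrpos : 0 < Real.sqrt (F.kappaStar s ^ 2) := Real.sqrt_pos.mpr hApos
      have hnum : (Real.sqrt (F.kappaStar s ^ 2))⁻¹ * (F.kappa s * F.kappaStar s) ≠ 0 :=
        mul_ne_zero (inv_ne_zero hrpos.ne') (mul_ne_zero (hkappa s) hne)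
      rw [div_eq_zero_iff] at hK
      rcases hK with h1 | h1
      · exact hnum ((pow_eq_zero_iff two_ne_zero).mp (neg_eq_zero.mp h1))
      · exact hApos.ne' h1
    refine ⟨hks, ?_⟩
    intro s
    have hk2 : (0:ℝ) < F.kappa s ^ 2 :=
      lt_of_le_of_ne (sq_nonneg _) (Ne.symm (pow_ne_zero 2 (hkappa s)))
    have h1 : F.kappa s * (F.B s ⬝ᵥ F.Nstar s + 1 - F.B s ⬝ᵥ F.Nstar s) = F.kappa s := by
      ring
    have hd : (F.kappa s * (F.B s ⬝ᵥ F.Nstar s + 1 - F.B s ⬝ᵥ F.Nstar s)) ^ 2 +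
        F.kappaStar s ^ 2 ≠ 0 := by
      intro hc
      rw [h1, hks s] at hc
      nlinarith
    obtain ⟨-, hH⟩ := h s (F.B s ⬝ᵥ F.Nstar s + 1) (hreg_iff s _ hd)
    simp only [MeanH] at hH
    rw [hg s _, hf s _, hden s _, hG s _, he hks s _, h1, hks s] at hH
    have hz : F.kappa s ^ 2 + (0:ℝ) ^ 2 = F.kappa s ^ 2 := by ring
    rw [hz] at hH
    have hrpos : 0 < Real.sqrt (F.kappa s ^ 2) := Real.sqrt_pos.mpr hk2
    -- hH : (√(κ²)⁻¹ * (κ * (τ * κ)) * 1 - 2 * (√(κ²)⁻¹ * -(κ * 0)) * _ + 0 * _) / κ² = 0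
    rw [div_eq_zero_iff] at hH
    rcases hH with h2 | h2
    · simp only [mul_zero, neg_zero, zero_mul, mul_one, sub_zero, add_zero] at h2
      rcases mul_eq_zero.mp h2 with h3 | h3
      · exact absurd h3 (inv_ne_zero hrpos.ne')
      · rcases mul_eq_zero.mp h3 with h4 | h4
        · exact absurd h4 (hkappa s)
        · rcases mul_eq_zero.mp h4 with h5 | h5
          · exact h5
          · exact absurd h5 (hkappa s)
    · exact absurd h2 hk2.ne'
  · rintro ⟨hks, htau⟩ s v _
    constructor
    · rw [hKval s v, hks s]
      simp
    · simp only [MeanH]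
      rw [hg s v, hf s v, he hks s v, hks s, htau s]
      simp

end
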